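/- Let A be a nonempty arrangement in a finite-dimensional complex vector space, fix H_0 = ker α_0 ∈ A, and let (A, A', A'') be the associated triple. Every θ ∈ D(A) satisfies θ(α_0 S) ⊆ α_0 S, and hence induces a derivation θ̄ of S̄ = S/α_0 S (identified with Sym(H_0^*)) by θ̄(f + α_0 S) = θ(f) + α_0 S. Then θ̄ ∈ D(A''); moreover, if θ is homogeneous of polynomial degree p and θ̄ ≠ 0, then θ̄ is homogeneous of polynomial degree p. -/

import Mathlib

/-!
Every `θ ∈ D(A)` satisfies `α_H ∣ θ(α_H)` for each `H ∈ A`: writing `Q = α_H · Q_H`, the Leibniz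
rule gives `α_H ∣ Q_H · θ(α_H)`, and `α_H` is a prime of `S ≅ ℂ[x_0, …, x_m]` (a coordinate
function) that divides no other factor of `Q`, since distinct hyperplanes have non-proportional
forms. Hence `θ` preserves `α₀ S`, which is the kernel of restriction `S → Poly H₀`, so `θ`
descends to `θ̄`. A hyperplane of `A''` is `H ∩ H₀` with form a multiple of `α_H|_{H₀}`, and
`θ̄(α_H|_{H₀}) = θ(α_H)|_{H₀}` is divisible by `α_H|_{H₀}`; so `θ̄ ∈ D(A'')`. Homogeneity passes to
`θ̄` because every linear form on `H₀` extends to `V`.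
-/

open scoped Classical

set_option synthInstance.maxHeartbeats 1000000
set_option maxHeartbeats 1000000

universe u

namespace IndFreeArr

/-- A hyperplane in `V`: the kernel of a nonzero linear functional. -/
def IsHyperplane (V : Type u) [AddCommGroup V] [Module ℂ V] (H : Submodule ℂ V) : Prop :=
  ∃ φ : V →ₗ[ℂ] ℂ, φ ≠ 0 ∧ LinearMap.ker φ = H

/-- A (central) hyperplane arrangement: a finite set of hyperplanes. -/
def IsArrangement (V : Type u) [AddCommGroup V] [Module ℂ V]
    (A : Finset (Submodule ℂ V)) : Prop :=
  ∀ H ∈ A, IsHyperplane V H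

/-- The algebra of polynomial functions on `V`, i.e. the subalgebra of `V → ℂ`
generated by the linear functionals (a model of `Sym(V*)` for `V` finite dimensional). -/
noncomputable def Poly (V : Type u) [AddCommGroup V] [Module ℂ V] : Subalgebra ℂ (V → ℂ) :=
  Algebra.adjoin ℂ (Set.range fun φ : V →ₗ[ℂ] ℂ => (φ : V → ℂ))

/-- A linear functional viewed as a polynomial function. -/
noncomputable def linToPoly (V : Type u) [AddCommGroup V] [Module ℂ V] (φ : V →ₗ[ℂ] ℂ) : Poly V :=
  ⟨(φ : V → ℂ), Algebra.subset_adjoin ⟨φ, rfl⟩⟩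

/-- `Q` is a defining polynomial of the arrangement `A`:
`Q = ∏_{H ∈ A} α_H` for some choice of linear forms `α_H` with `ker α_H = H`. -/
noncomputable def IsDefiningPoly (V : Type u) [AddCommGroup V] [Module ℂ V]
    (A : Finset (Submodule ℂ V)) (Q : Poly V) : Prop :=
  ∃ α : Submodule ℂ V → (V →ₗ[ℂ] ℂ),
    (∀ H ∈ A, α H ≠ 0 ∧ LinearMap.ker (α H) = H) ∧
    Q = ∏ H ∈ A, linToPoly V (α H)

/-- The module `D(A)` of `A`-derivations: derivations `θ` of `S = Poly V` with
`θ(Q) ∈ Q·S` for the defining polynomial(s) `Q` of `A`. -/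
noncomputable def DerA (V : Type u) [AddCommGroup V] [Module ℂ V] (A : Finset (Submodule ℂ V)) :
    Submodule (Poly V) (Derivation ℂ (Poly V) (Poly V)) where
  carrier := {θ | ∀ Q : Poly V, IsDefiningPoly V A Q → ∃ f : Poly V, θ Q = Q * f}
  add_mem' := by
    intro θ₁ θ₂ h₁ h₂ Q hQ
    obtain ⟨f₁, e₁⟩ := h₁ Q hQ
    obtain ⟨f₂, e₂⟩ := h₂ Q hQ
    exact ⟨f₁ + f₂, by simp [e₁, e₂, mul_add]⟩
  zero_mem' := by
    intro Q hQ
    exact ⟨0, by simp⟩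
  smul_mem' := by
    intro c θ h Q hQ
    obtain ⟨f, e⟩ := h Q hQ
    refine ⟨c * f, ?_⟩
    simp only [Derivation.smul_apply, e, smul_eq_mul]
    ring

/-- The arrangement `A` is free: `D(A)` is a free module over `S = Poly V`. -/
def IsFree (V : Type u) [AddCommGroup V] [Module ℂ V] (A : Finset (Submodule ℂ V)) : Prop :=
  Module.Free (Poly V) (DerA V A)

/-- A polynomial function is homogeneous of degree `p`. -/
def IsHomog (V : Type u) [AddCommGroup V] [Module ℂ V] (p : ℕ) (f : Poly V) : Prop :=
  ∀ (t : ℂ) (v : V), (f : V → ℂ) (t • v) = t ^ p * (f : V → ℂ) v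

/-- A derivation is homogeneous of polynomial degree `p`: it sends every linear form to a
homogeneous polynomial of degree `p`. -/
def IsDerHomog (V : Type u) [AddCommGroup V] [Module ℂ V] (p : ℕ)
    (θ : Derivation ℂ (Poly V) (Poly V)) : Prop :=
  ∀ φ : V →ₗ[ℂ] ℂ, IsHomog V p (θ (linToPoly V φ))

/-- `e` is the multiset of exponents of `A`: the multiset of polynomial degrees of some
homogeneous basis of `D(A)`. -/
def IsExponents (V : Type u) [AddCommGroup V] [Module ℂ V]
    (A : Finset (Submodule ℂ V)) (e : Multiset ℕ) : Prop :=
  ∃ (n : ℕ) (d : Fin n → ℕ) (b : Module.Basis (Fin n) (Poly V) (DerA V A)),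
    (∀ i, IsDerHomog V (d i) ↑(b i)) ∧ e = Multiset.map d Finset.univ.val

/-- The restriction `A^X = {X ∩ H : H ∈ A, X ⊄ H}` of `A` to `X`,
as an arrangement in the space `X`. -/
noncomputable def restrict (V : Type u) [AddCommGroup V] [Module ℂ V]
    (A : Finset (Submodule ℂ V)) (X : Submodule ℂ V) : Finset (Submodule ℂ ↥X) :=
  (A.filter fun H => ¬ X ≤ H).image fun H => Submodule.comap X.subtype H

/-- The class of inductively free arrangements: the smallest class containing all empty
arrangements and closed under the addition of a hyperplane `H₀` such that
`A' = A \ {H₀}` and `A'' = A^{H₀}` are inductively free with `exp A'' ⊆ exp A'`. -/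
inductive IsIndFree : ∀ (V : Type u) [AddCommGroup V] [Module ℂ V],
    Finset (Submodule ℂ V) → Prop where
  | empty (V : Type u) [AddCommGroup V] [Module ℂ V] : IsIndFree V ∅
  | step (V : Type u) [AddCommGroup V] [Module ℂ V] (A : Finset (Submodule ℂ V))
      (H₀ : Submodule ℂ V) (hmem : H₀ ∈ A)
      (h' : IsIndFree V (A.erase H₀))
      (h'' : IsIndFree ↥H₀ (restrict V A H₀))
      (hexp : ∃ e'' e' : Multiset ℕ, IsExponents ↥H₀ (restrict V A H₀) e'' ∧
        IsExponents V (A.erase H₀) e' ∧ e'' ≤ e') :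
      IsIndFree V A

/-- `X` belongs to the intersection lattice `L(A)`:
`X` is an intersection of some subset of `A` (with `X = V` for the empty subset). -/
def InLattice (V : Type u) [AddCommGroup V] [Module ℂ V]
    (A : Finset (Submodule ℂ V)) (X : Submodule ℂ V) : Prop :=
  ∃ s : Finset (Submodule ℂ V), s ⊆ A ∧ X = s.inf id

/-- `A` is hereditarily inductively free: every restriction `A^X`, `X ∈ L(A)`,
is inductively free. -/
def IsHerIndFree (V : Type u) [AddCommGroup V] [Module ℂ V]
    (A : Finset (Submodule ℂ V)) : Prop :=
  ∀ X : Submodule ℂ V, InLattice V A X → IsIndFree ↥X (restrict V A X)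


/-- Restriction of functions on `V` to a submodule `X`, as a `ℂ`-algebra homomorphism. -/
def precompAlgHom (V : Type u) [AddCommGroup V] [Module ℂ V] (X : Submodule ℂ V) :
    (V → ℂ) →ₐ[ℂ] (↥X → ℂ) where
  toFun f := fun x => f ↑x
  map_one' := rfl
  map_mul' _ _ := rfl
  map_zero' := rfl
  map_add' _ _ := rfl
  commutes' _ := rfl

lemma poly_map_le (V : Type u) [AddCommGroup V] [Module ℂ V] (X : Submodule ℂ V) :
    Subalgebra.map (precompAlgHom V X) (Poly V) ≤ Poly ↥X := by
  rw [Poly, AlgHom.map_adjoin]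
  refine Algebra.adjoin_le ?_
  rintro g ⟨-, ⟨φ, rfl⟩, rfl⟩
  exact Algebra.subset_adjoin ⟨φ.comp X.subtype, rfl⟩

/-- The restriction homomorphism `S = Poly V → S̄ ≅ Sym(X*) = Poly X`, realizing the
quotient of `S` by the ideal of functions vanishing on `X`. -/
noncomputable def resHom (V : Type u) [AddCommGroup V] [Module ℂ V] (X : Submodule ℂ V) :
    Poly V →ₐ[ℂ] Poly ↥X :=
  ((precompAlgHom V X).comp (Poly V).val).codRestrict (Poly ↥X)
    (fun f => poly_map_le V X ⟨↑f, f.2, rfl⟩)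

section DerivationDvd

variable {R A : Type*} [CommSemiring R] [CommRing A] [Algebra R A] (D : Derivation R A A)

theorem _root_.Derivation.dvd_apply_of_dvd {p f : A} (hp : p ∣ D p) (hf : p ∣ f) : p ∣ D f := by
  obtain ⟨g, rfl⟩ := hf
  rw [D.leibniz, smul_eq_mul, smul_eq_mul]
  exact dvd_add (dvd_mul_right p _) (dvd_mul_of_dvd_right hp g)

theorem _root_.Derivation.prod_dvd_apply_prod {ι : Type*} (s : Finset ι) (p : ι → A)
    (h : ∀ i ∈ s, p i ∣ D (p i)) : ∏ i ∈ s, p i ∣ D (∏ i ∈ s, p i) := by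
  induction s using Finset.induction_on with
  | empty => simp
  | insert i s hi ih =>
    obtain ⟨a, ha⟩ := h i (Finset.mem_insert_self i s)
    obtain ⟨b, hb⟩ := ih fun j hj => h j (Finset.mem_insert_of_mem hj)
    rw [Finset.prod_insert hi, D.leibniz, smul_eq_mul, smul_eq_mul, ha, hb]
    exact ⟨b + a, by ring⟩

theorem _root_.Derivation.dvd_apply_of_prod_dvd {ι : Type*} {s : Finset ι} {p : ι → A} {i : ι}
    (hi : i ∈ s) (hpi : Prime (p i)) (hndvd : ∀ j ∈ s, j ≠ i → ¬ p i ∣ p j)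
    (h : ∏ j ∈ s, p j ∣ D (∏ j ∈ s, p j)) : p i ∣ D (p i) := by
  have hdvd : p i ∣ (∏ j ∈ s.erase i, p j) * D (p i) := by
    have hD : p i ∣ D (∏ j ∈ s, p j) := (Finset.dvd_prod_of_mem p hi).trans h
    rw [← Finset.mul_prod_erase s p hi, D.leibniz, smul_eq_mul, smul_eq_mul] at hD
    exact (dvd_add_right (dvd_mul_right _ _)).mp hD
  refine (hpi.dvd_or_dvd hdvd).resolve_left fun hQ => ?_
  obtain ⟨j, hj, hij⟩ := hpi.exists_mem_finset_dvd hQ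
  exact hndvd j (Finset.mem_of_mem_erase hj) (Finset.ne_of_mem_erase hj) hij

end DerivationDvd

section Descend

variable {R A B : Type*} [CommSemiring R] [CommRing A] [CommRing B] [Algebra R A] [Algebra R B]

theorem apply_surjInv_eq {π : A →ₐ[R] B} (hπ : Function.Surjective π) {D : Derivation R A A}
    (hD : ∀ f, π f = 0 → π (D f) = 0) (f : A) :
    π (D (Function.surjInv hπ (π f))) = π (D f) := by
  rw [← sub_eq_zero, ← map_sub, ← map_sub]
  exact hD _ (by rw [map_sub, Function.surjInv_eq hπ, sub_self])

noncomputable def _root_.Derivation.descend (D : Derivation R A A) {π : A →ₐ[R] B}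
    (hπ : Function.Surjective π) (hD : ∀ f, π f = 0 → π (D f) = 0) : Derivation R B B where
  toFun g := π (D (Function.surjInv hπ g))
  map_add' := hπ.forall₂.2 fun f g => by
    simp only [← map_add, apply_surjInv_eq hπ hD]
  map_smul' c := hπ.forall.2 fun f => by
    simp only [← map_smul, apply_surjInv_eq hπ hD, D.map_smul, RingHom.id_apply]
  map_one_eq_zero' := by
    simp only [LinearMap.coe_mk, AddHom.coe_mk, ← map_one π, apply_surjInv_eq hπ hD,
      D.map_one_eq_zero, map_zero]
  leibniz' := hπ.forall₂.2 fun f g => by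
    simp only [LinearMap.coe_mk, AddHom.coe_mk, apply_surjInv_eq hπ hD, smul_eq_mul]
    rw [← map_mul π f g, apply_surjInv_eq hπ hD, D.leibniz, map_add, smul_eq_mul, smul_eq_mul,
      map_mul, map_mul]

theorem _root_.Derivation.descend_apply (D : Derivation R A A) {π : A →ₐ[R] B}
    (hπ : Function.Surjective π) (hD : ∀ f, π f = 0 → π (D f) = 0) (f : A) :
    D.descend hπ hD (π f) = π (D f) :=
  apply_surjInv_eq hπ hD f

end Descend

theorem _root_.LinearMap.exists_smul_eq_of_ker_le {𝕜 E : Type*} [Field 𝕜] [AddCommGroup E]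
    [Module 𝕜 E] {α β : E →ₗ[𝕜] 𝕜} (h : LinearMap.ker α ≤ LinearMap.ker β) :
    ∃ c : 𝕜, c • α = β := by
  have hβ : β ∈ Submodule.span 𝕜 (Set.range fun _ : Unit => α) :=
    mem_span_of_iInf_ker_le_ker (by simpa using h)
  simpa [Set.range_const, Submodule.mem_span_singleton] using hβ

theorem _root_.LinearMap.ker_eq_of_ker_le {𝕜 E : Type*} [Field 𝕜] [AddCommGroup E]
    [Module 𝕜 E] {α β : E →ₗ[𝕜] 𝕜} (hβ : β ≠ 0) (h : LinearMap.ker α ≤ LinearMap.ker β) :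
    LinearMap.ker α = LinearMap.ker β := by
  obtain ⟨c, rfl⟩ := LinearMap.exists_smul_eq_of_ker_le h
  exact (LinearMap.ker_smul α c (by rintro rfl; simp at hβ)).symm

theorem _root_.MvPolynomial.X_zero_dvd_of_eval_eq_zero {R : Type*} [CommRing R] [IsDomain R]
    [Infinite R] {m : ℕ} {P : MvPolynomial (Fin (m + 1)) R}
    (h : ∀ y : Fin (m + 1) → R, y 0 = 0 → MvPolynomial.eval y P = 0) :
    MvPolynomial.X 0 ∣ P := by
  set q := MvPolynomial.finSuccEquiv R m P
  have hq : q.coeff 0 = 0 := MvPolynomial.funext fun s => by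
    have h0 := h (Fin.cons 0 s) rfl
    rw [MvPolynomial.eval_eq_eval_mv_eval', ← Polynomial.coeff_zero_eq_eval_zero,
      Polynomial.coeff_map] at h0
    simpa using h0
  have hdvd := map_dvd (MvPolynomial.finSuccEquiv R m).symm (Polynomial.X_dvd_iff.mpr hq)
  rwa [← MvPolynomial.finSuccEquiv_X_zero, AlgEquiv.symm_apply_apply,
    AlgEquiv.symm_apply_apply] at hdvd

section Poly

variable {V : Type u} [AddCommGroup V] [Module ℂ V]

@[simp] theorem linToPoly_apply (φ : V →ₗ[ℂ] ℂ) (x : V) :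
    ((linToPoly V φ : Poly V) : V → ℂ) x = φ x := rfl

theorem linToPoly_smul (c : ℂ) (φ : V →ₗ[ℂ] ℂ) :
    linToPoly V (c • φ) = c • linToPoly V φ := rfl

theorem exists_basis_coord_zero_eq {α : V →ₗ[ℂ] ℂ} (hα : α ≠ 0) [FiniteDimensional ℂ V] :
    ∃ (m : ℕ) (b : Module.Basis (Fin (m + 1)) ℂ V), b.coord 0 = α := by
  obtain ⟨v, hv⟩ : ∃ v, α v = 1 := by
    obtain ⟨w, hw⟩ : ∃ w, α w ≠ 0 := by
      by_contra! h; exact hα (LinearMap.ext h)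
    exact ⟨(α w)⁻¹ • w, by simp [hw]⟩
  let b := Module.Basis.mkFinCons v (Module.finBasis ℂ (LinearMap.ker α))
    (fun c x hx hcx => by simpa [hv, LinearMap.mem_ker.mp hx] using congrArg α hcx)
    (fun z => ⟨-α z, by simp [hv]⟩)
  refine ⟨_, b, b.ext fun i => ?_⟩
  rw [Module.Basis.coord_apply, Module.Basis.repr_self]
  induction i using Fin.cases with
  | zero => simp [b, hv]
  | succ j => simp [b, Fin.succ_ne_zero]

end Poly

section Coordinates

open MvPolynomial

variable {V : Type u} [AddCommGroup V] [Module ℂ V] {n : ℕ}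

noncomputable def evalCoords (b : Module.Basis (Fin n) ℂ V) : MvPolynomial (Fin n) ℂ →ₐ[ℂ] Poly V :=
  aeval fun i => linToPoly V (b.coord i)

theorem evalCoords_X (b : Module.Basis (Fin n) ℂ V) (i : Fin n) :
    evalCoords b (X i) = linToPoly V (b.coord i) :=
  aeval_X _ i

theorem evalCoords_apply_apply (b : Module.Basis (Fin n) ℂ V) (P : MvPolynomial (Fin n) ℂ)
    (x : V) : ((evalCoords b P : Poly V) : V → ℂ) x = eval (b.equivFun x) P := by
  induction P using MvPolynomial.induction_on with
  | C c => simp [evalCoords]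
  | add P Q hP hQ => simp [hP, hQ]
  | mul_X P i hP => simp [hP, evalCoords_X]

theorem linToPoly_eq_evalCoords (b : Module.Basis (Fin n) ℂ V) (φ : V →ₗ[ℂ] ℂ) :
    linToPoly V φ = evalCoords b (∑ i, φ (b i) • X i) := by
  apply Subtype.ext
  funext x
  rw [linToPoly_apply, evalCoords_apply_apply]
  conv_lhs => rw [← b.sum_repr x, map_sum]
  simp [mul_comm]

theorem evalCoords_bijective (b : Module.Basis (Fin n) ℂ V) :
    Function.Bijective (evalCoords b) := by
  refine ⟨(injective_iff_map_eq_zero _).2 fun P hP => MvPolynomial.funext fun y => ?_, ?_⟩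
  · have h := congrArg (fun f : Poly V => (f : V → ℂ) (b.equivFun.symm y)) hP
    simpa only [evalCoords_apply_apply, b.equivFun.apply_symm_apply, map_zero,
      ZeroMemClass.coe_zero, Pi.zero_apply] using h
  · intro g
    have hle : Poly V ≤ (evalCoords b).range.map (Poly V).val := Algebra.adjoin_le <| by
      rintro _ ⟨φ, rfl⟩
      exact ⟨linToPoly V φ, ⟨_, (linToPoly_eq_evalCoords b φ).symm⟩, rfl⟩
    obtain ⟨_, ⟨P, rfl⟩, hP⟩ := hle g.2
    exact ⟨P, Subtype.ext hP⟩

end Coordinates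

section LinearForms

variable {V : Type u} [AddCommGroup V] [Module ℂ V] [FiniteDimensional ℂ V]

theorem prime_linToPoly {α : V →ₗ[ℂ] ℂ} (hα : α ≠ 0) : Prime (linToPoly V α) := by
  obtain ⟨m, b, rfl⟩ := exists_basis_coord_zero_eq hα
  rw [← evalCoords_X]
  exact (MulEquiv.prime_iff (AlgEquiv.ofBijective _ (evalCoords_bijective b)).toMulEquiv).mpr
    MvPolynomial.X_prime

theorem linToPoly_dvd_iff {α : V →ₗ[ℂ] ℂ} (hα : α ≠ 0) (f : Poly V) :
    linToPoly V α ∣ f ↔ ∀ x ∈ LinearMap.ker α, (f : V → ℂ) x = 0 := by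
  refine ⟨fun ⟨g, hg⟩ x hx => by simp [hg, LinearMap.mem_ker.mp hx], fun hf => ?_⟩
  obtain ⟨m, b, rfl⟩ := exists_basis_coord_zero_eq hα
  obtain ⟨P, rfl⟩ := (evalCoords_bijective b).2 f
  rw [← evalCoords_X]
  refine map_dvd _ (MvPolynomial.X_zero_dvd_of_eval_eq_zero fun y hy => ?_)
  have h := hf (b.equivFun.symm y) <| by
    rw [LinearMap.mem_ker, Module.Basis.coord_apply, ← Module.Basis.equivFun_apply,
      b.equivFun.apply_symm_apply, hy]
  rwa [evalCoords_apply_apply, b.equivFun.apply_symm_apply] at h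

theorem ker_le_of_linToPoly_dvd {α β : V →ₗ[ℂ] ℂ} (hα : α ≠ 0)
    (h : linToPoly V α ∣ linToPoly V β) : LinearMap.ker α ≤ LinearMap.ker β :=
  (linToPoly_dvd_iff hα _).mp h

end LinearForms

section Restriction

variable {V : Type u} [AddCommGroup V] [Module ℂ V] (X : Submodule ℂ V)

@[simp] theorem resHom_apply (f : Poly V) (x : X) :
    ((resHom V X f : Poly X) : X → ℂ) x = (f : V → ℂ) x := rfl

theorem resHom_linToPoly (φ : V →ₗ[ℂ] ℂ) :
    resHom V X (linToPoly V φ) = linToPoly X (φ.comp X.subtype) := rfl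

theorem resHom_surjective : Function.Surjective (resHom V X) := by
  intro g
  have hle : Poly X ≤ (resHom V X).range.map (Poly X).val := Algebra.adjoin_le <| by
    rintro _ ⟨ψ, rfl⟩
    obtain ⟨φ, rfl⟩ := LinearMap.exists_extend ψ
    exact ⟨_, ⟨linToPoly V φ, rfl⟩, rfl⟩
  obtain ⟨_, ⟨f, rfl⟩, hf⟩ := hle g.2
  exact ⟨f, Subtype.ext hf⟩

theorem resHom_eq_zero_iff (f : Poly V) :
    resHom V X f = 0 ↔ ∀ x ∈ X, (f : V → ℂ) x = 0 := by
  refine ⟨fun h x hx => congrFun (congrArg Subtype.val h) ⟨x, hx⟩, fun h => ?_⟩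
  exact Subtype.ext (funext fun x => h x x.2)

theorem resHom_ker_eq_zero_iff [FiniteDimensional ℂ V] {α : V →ₗ[ℂ] ℂ} (hα : α ≠ 0)
    (f : Poly V) : resHom V (LinearMap.ker α) f = 0 ↔ linToPoly V α ∣ f :=
  (resHom_eq_zero_iff _ f).trans (linToPoly_dvd_iff hα f).symm

theorem IsHomog.resHom {p : ℕ} {f : Poly V} (hf : IsHomog V p f) :
    IsHomog X p (resHom V X f) :=
  fun t x => hf t x

theorem isDerHomog_of_comp_resHom {p : ℕ} {θ : Derivation ℂ (Poly V) (Poly V)}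
    {θ' : Derivation ℂ (Poly X) (Poly X)} (hcomm : ∀ f, θ' (resHom V X f) = resHom V X (θ f))
    (hθ : IsDerHomog V p θ) : IsDerHomog X p θ' := by
  intro ψ
  obtain ⟨φ, rfl⟩ := LinearMap.exists_extend ψ
  rw [← resHom_linToPoly, hcomm]
  exact (hθ φ).resHom X

end Restriction

section DerA

variable {V : Type u} [AddCommGroup V] [Module ℂ V]

theorem mem_DerA_of_forall_dvd {A : Finset (Submodule ℂ V)} {θ : Derivation ℂ (Poly V) (Poly V)}
    (h : ∀ H ∈ A, ∀ α : V →ₗ[ℂ] ℂ, LinearMap.ker α = H → linToPoly V α ∣ θ (linToPoly V α)) :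
    θ ∈ DerA V A := by
  rintro Q ⟨α, hα, rfl⟩
  exact θ.prod_dvd_apply_prod A _ fun H hH => h H hH (α H) (hα H hH).2

theorem linToPoly_dvd_apply_of_mem_DerA [FiniteDimensional ℂ V] {A : Finset (Submodule ℂ V)}
    (hA : IsArrangement V A) {θ : Derivation ℂ (Poly V) (Poly V)} (hθ : θ ∈ DerA V A)
    {α : V →ₗ[ℂ] ℂ} (hα : α ≠ 0) (hαA : LinearMap.ker α ∈ A) :
    linToPoly V α ∣ θ (linToPoly V α) := by
  let forms : Submodule ℂ V → V →ₗ[ℂ] ℂ :=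
    Function.update (fun H => if hH : H ∈ A then (hA H hH).choose else 0) (LinearMap.ker α) α
  have hforms : ∀ H ∈ A, forms H ≠ 0 ∧ LinearMap.ker (forms H) = H := by
    intro H hH
    by_cases hHα : H = LinearMap.ker α
    · subst hHα
      simpa [forms] using hα
    · simpa [forms, hHα, hH] using (hA H hH).choose_spec
  have hdvd := θ.dvd_apply_of_prod_dvd (p := fun H => linToPoly V (forms H)) hαA
    (prime_linToPoly (hforms _ hαA).1) (fun H hH hHα hdvd => hHα ?_) (hθ _ ⟨forms, hforms, rfl⟩)
  · simpa [forms] using hdvd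
  · rw [← (hforms H hH).2, ← (hforms _ hαA).2]
    exact (LinearMap.ker_eq_of_ker_le (hforms H hH).1
      (ker_le_of_linToPoly_dvd (hforms _ hαA).1 hdvd)).symm

theorem mem_DerA_restrict [FiniteDimensional ℂ V] {A : Finset (Submodule ℂ V)}
    (hA : IsArrangement V A) {θ : Derivation ℂ (Poly V) (Poly V)} (hθ : θ ∈ DerA V A)
    {X : Submodule ℂ V} {θ' : Derivation ℂ (Poly X) (Poly X)}
    (hcomm : ∀ f, θ' (resHom V X f) = resHom V X (θ f)) :
    θ' ∈ DerA X (restrict V A X) := by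
  refine mem_DerA_of_forall_dvd fun K hK β hβ => ?_
  obtain ⟨H, hHX, rfl⟩ := Finset.mem_image.mp hK
  have hHA := (Finset.mem_filter.mp hHX).1
  obtain ⟨α, hα, rfl⟩ := hA H hHA
  obtain ⟨c, rfl⟩ := LinearMap.exists_smul_eq_of_ker_le
    ((LinearMap.ker_comp X.subtype α).trans_le hβ.ge)
  rw [linToPoly_smul, θ'.map_smul, ← resHom_linToPoly, hcomm, Algebra.smul_def, Algebra.smul_def]
  exact mul_dvd_mul_left _ (map_dvd _
    (linToPoly_dvd_apply_of_mem_DerA hA hθ hα hHA))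

end DerA

theorem induced_derivation_general (V : Type u) [AddCommGroup V] [Module ℂ V] [FiniteDimensional ℂ V]
    (A : Finset (Submodule ℂ V)) (hA : IsArrangement V A)
    (H₀ : Submodule ℂ V) (hH₀ : H₀ ∈ A)
    (α₀ : V →ₗ[ℂ] ℂ) (hα₀ : α₀ ≠ 0 ∧ LinearMap.ker α₀ = H₀)
    (θ : Derivation ℂ (Poly V) (Poly V)) (hθ : θ ∈ DerA V A) (p : ℕ) :
    (∀ f : Poly V, (∃ g : Poly V, f = linToPoly V α₀ * g) →
      ∃ g : Poly V, θ f = linToPoly V α₀ * g) ∧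
    (∃ θbar : Derivation ℂ (Poly ↥H₀) (Poly ↥H₀),
      (∀ f : Poly V, θbar (resHom V H₀ f) = resHom V H₀ (θ f)) ∧
      θbar ∈ DerA ↥H₀ (restrict V A H₀) ∧
      (IsDerHomog V p θ → θbar ≠ 0 → IsDerHomog ↥H₀ p θbar)) := by
  obtain ⟨hα₀, rfl⟩ := hα₀
  have hpres : ∀ f : Poly V, linToPoly V α₀ ∣ f → linToPoly V α₀ ∣ θ f := fun _ =>
    θ.dvd_apply_of_dvd (linToPoly_dvd_apply_of_mem_DerA hA hθ hα₀ hH₀)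
  have hker : ∀ f, resHom V (LinearMap.ker α₀) f = 0 → resHom V (LinearMap.ker α₀) (θ f) = 0 := by
    simpa only [resHom_ker_eq_zero_iff hα₀] using hpres
  have hcomm := θ.descend_apply (resHom_surjective _) hker
  exact ⟨hpres, _, hcomm, mem_DerA_restrict hA hθ hcomm,
    fun hhom _ => isDerHomog_of_comp_resHom _ hcomm hhom⟩

/-- Every `θ ∈ D(A)` preserves the ideal `α₀ S` and induces a derivation `θ̄` of
`S̄ ≅ Sym(H₀^*)` (characterized by `θ̄ ∘ res = res ∘ θ` for the restriction map
`res : S → S̄`); moreover `θ̄ ∈ D(A'')`, and if `θ` is homogeneous of polynomial degree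
`p` and `θ̄ ≠ 0` then `θ̄` is homogeneous of polynomial degree `p`. -/
theorem induced_derivation (V : Type u) [AddCommGroup V] [Module ℂ V] [FiniteDimensional ℂ V]
    (A : Finset (Submodule ℂ V)) (hA : IsArrangement V A) (hne : A ≠ ∅)
    (H₀ : Submodule ℂ V) (hH₀ : H₀ ∈ A)
    (α₀ : V →ₗ[ℂ] ℂ) (hα₀ : α₀ ≠ 0 ∧ LinearMap.ker α₀ = H₀)
    (θ : Derivation ℂ (Poly V) (Poly V)) (hθ : θ ∈ DerA V A) (p : ℕ) :
    (∀ f : Poly V, (∃ g : Poly V, f = linToPoly V α₀ * g) →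
      ∃ g : Poly V, θ f = linToPoly V α₀ * g) ∧
    (∃ θbar : Derivation ℂ (Poly ↥H₀) (Poly ↥H₀),
      (∀ f : Poly V, θbar (resHom V H₀ f) = resHom V H₀ (θ f)) ∧
      θbar ∈ DerA ↥H₀ (restrict V A H₀) ∧
      (IsDerHomog V p θ → θbar ≠ 0 → IsDerHomog ↥H₀ p θbar)) :=
  induced_derivation_general V A hA H₀ hH₀ α₀ hα₀ θ hθ p

end IndFreeArr
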